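/- arXiv:1504.06157 — 3 statements merged into one kernel-verified Lean document; each statement's English description precedes it below -/
import Mathlib

section
/- For every prime p and every integer n ≥ 1, there exists a nonzero locally constant compactly supported function φ : M_n(ℚ_p) → ℂ which is a Lie algebra cusp form, i.e. such that for every proper flag in ℚ_p^n with nilpotent radical 𝔫 (equipped with a Haar measure) and every X ∈ M_n(ℚ_p), the integral ∫_𝔫 φ(X + U) dU equals 0. -/
/-!
Let `B` be a matrix over `𝔽_p` acting on `𝔽_p^n` without invariant subspaces (multiplication by a
primitive element of `𝔽_{p^n}`), let `ψ` be a nontrivial additive character of `𝔽_p`, and let `φ`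
be the character `Z ↦ ψ(tr(B Z̄))` of `M_n(ℤ_p)`,
extended by zero to `M_n(ℚ_p)`; it is locally constant and compactly supported.
Given a proper flag, the Smith normal form of the lattice `V_1 ∩ ℤ_p^n` yields `g ∈ GL_n(ℤ_p)`
carrying `V_1` onto a coordinate subspace. The conjugates by `g` of the matrix units mapping
`ℚ_p^n` into that subspace and killing it are integral elements `U` of the nilpotent radical, and
since `ḡ B ḡ⁻¹` preserves no coordinate subspace, `tr(B Ū) ≠ 0` for one of them. Translation by
this `U` multiplies `φ` by `ψ(tr(B Ū)) ≠ 1`, so the integral of `φ` over every coset of the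
radical vanishes.
-/

open Matrix

noncomputable section

/-- A proper flag in `ℚ_p^n`: a strictly increasing chain of `ℚ_p`-subspaces
`0 = V 0 ⊊ V 1 ⊊ ⋯ ⊊ V r = ℚ_p^n` with `r ≥ 2`. -/
structure ProperFlag (p n : ℕ) [Fact p.Prime] where
  r : ℕ
  two_le_r : 2 ≤ r
  V : Fin (r + 1) → Submodule ℚ_[p] (Fin n → ℚ_[p])
  strictMono : StrictMono V
  zero_eq_bot : V 0 = ⊥
  last_eq_top : V (Fin.last r) = ⊤

variable {p n : ℕ} [Fact p.Prime]

namespace ProperFlag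

lemma mapsTo_of_mem {F : ProperFlag p n} {g : GL (Fin n) ℚ_[p]}
    (hg : ∀ i : Fin F.r, ∀ v ∈ F.V i.succ, g.val.mulVec v - v ∈ F.V i.castSucc)
    (i : Fin F.r) : ∀ v ∈ F.V i.succ, g.val.mulVec v ∈ F.V i.succ := by
  intro v hv
  have h1 : g.val.mulVec v - v ∈ F.V i.castSucc := hg i v hv
  have h2 : F.V i.castSucc ≤ F.V i.succ := le_of_lt (F.strictMono (show i.castSucc < i.succ from Fin.castSucc_lt_succ))
  have := (F.V i.succ).add_mem (h2 h1) hv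
  simpa using this

/-- The unipotent radical of a proper flag:
`N = {g ∈ GL_n(ℚ_p) : (g - 1) V_i ⊆ V_{i-1} for all 1 ≤ i ≤ r}`. -/
def N (F : ProperFlag p n) : Subgroup (GL (Fin n) ℚ_[p]) where
  carrier := {g | ∀ i : Fin F.r, ∀ v ∈ F.V i.succ, g.val.mulVec v - v ∈ F.V i.castSucc}
  one_mem' := by
    intro i v hv
    simp only [Units.val_one, Matrix.one_mulVec, sub_self]
    exact (F.V i.castSucc).zero_mem
  mul_mem' := by
    intro g h hg hh i v hv
    have hw : h.val.mulVec v ∈ F.V i.succ := mapsTo_of_mem hh i v hv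
    have h1 : g.val.mulVec (h.val.mulVec v) - h.val.mulVec v ∈ F.V i.castSucc := hg i _ hw
    have h2 : h.val.mulVec v - v ∈ F.V i.castSucc := hh i v hv
    have := (F.V i.castSucc).add_mem h1 h2
    simpa [Matrix.mulVec_mulVec, Units.val_mul, sub_add_sub_cancel] using this
  inv_mem' := by
    intro g hg i v hv
    -- the restriction of `g` to `F.V i.succ` is a bijection since it is injective
    set W := F.V i.succ with hW
    have hmap : ∀ w ∈ W, g.val.mulVec w ∈ W := mapsTo_of_mem hg i
    let φ : W →ₗ[ℚ_[p]] W := (g.val.mulVecLin).restrict (by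
      intro w hw; simpa using hmap w hw)
    have hinj : Function.Injective φ := by
      intro a b hab
      have : g.val.mulVec a.1 = g.val.mulVec b.1 := congrArg Subtype.val hab
      have h2 : (g⁻¹).val.mulVec (g.val.mulVec a.1) = (g⁻¹).val.mulVec (g.val.mulVec b.1) := by
        rw [this]
      rw [Matrix.mulVec_mulVec, Matrix.mulVec_mulVec, ← Units.val_mul, inv_mul_cancel g,
        Units.val_one, Matrix.one_mulVec, Matrix.one_mulVec] at h2
      exact Subtype.ext h2
    have hsurj : Function.Surjective φ := (LinearMap.injective_iff_surjective).1 hinj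
    obtain ⟨⟨w, hw⟩, hweq⟩ := hsurj ⟨v, hv⟩
    have heq : g.val.mulVec w = v := congrArg Subtype.val hweq
    have hginv : (g⁻¹).val.mulVec v = w := by
      rw [← heq, Matrix.mulVec_mulVec, ← Units.val_mul, inv_mul_cancel g, Units.val_one,
        Matrix.one_mulVec]
    rw [hginv]
    have := (F.V i.castSucc).neg_mem (hg i w hw)
    simp only [neg_sub] at this
    simpa [heq] using this

/-- The nilpotent radical of a proper flag:
`𝔫 = {X ∈ M_n(ℚ_p) : X V_i ⊆ V_{i-1} for all 1 ≤ i ≤ r}`. -/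
def nil (F : ProperFlag p n) : Submodule ℚ_[p] (Matrix (Fin n) (Fin n) ℚ_[p]) where
  carrier := {X | ∀ i : Fin F.r, ∀ v ∈ F.V i.succ, X.mulVec v ∈ F.V i.castSucc}
  zero_mem' := by
    intro i v hv
    simp only [Matrix.zero_mulVec]
    exact (F.V i.castSucc).zero_mem
  add_mem' := by
    intro X Y hX hY i v hv
    have := (F.V i.castSucc).add_mem (hX i v hv) (hY i v hv)
    simpa [Matrix.add_mulVec] using this
  smul_mem' := by
    intro c X hX i v hv
    have := (F.V i.castSucc).smul_mem c (hX i v hv)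
    simpa [Matrix.smul_mulVec] using this

noncomputable instance (F : ProperFlag p n) : MeasurableSpace F.N := borel _
instance (F : ProperFlag p n) : BorelSpace F.N := ⟨rfl⟩
noncomputable instance (F : ProperFlag p n) : MeasurableSpace F.nil := borel _
instance (F : ProperFlag p n) : BorelSpace F.nil := ⟨rfl⟩

end ProperFlag

open MeasureTheory

/-- A cusp form on the Lie algebra `M_n(ℚ_p)`: a locally constant compactly supported
function whose integrals over the nilpotent radical of every proper flag vanish. -/
def IsLieCuspForm (φ : Matrix (Fin n) (Fin n) ℚ_[p] → ℂ) : Prop :=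
  IsLocallyConstant φ ∧ HasCompactSupport φ ∧
    ∀ (F : ProperFlag p n) (μ : Measure F.nil), μ.IsAddHaarMeasure →
      ∀ X : Matrix (Fin n) (Fin n) ℚ_[p],
        ∫ U : F.nil, φ (X + (U : Matrix (Fin n) (Fin n) ℚ_[p])) ∂μ = 0

open Filter Topology

namespace Matrix

variable {ι F : Type*} [Fintype ι] [Field F]

def HasOnlyTrivialInvariantSubspaces (B : Matrix ι ι F) : Prop :=
  ∀ W : Submodule F (ι → F), (∀ x ∈ W, B *ᵥ x ∈ W) → W = ⊥ ∨ W = ⊤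

variable {B : Matrix ι ι F}

theorem HasOnlyTrivialInvariantSubspaces.conj [DecidableEq ι]
    (hB : B.HasOnlyTrivialInvariantSubspaces) (g : GL ι F) :
    (g.val * B * (g⁻¹).val).HasOnlyTrivialInvariantSubspaces := by
  intro W hW
  have hg : ∀ x, g.val *ᵥ (g⁻¹).val *ᵥ x = x := by
    intro x; rw [mulVec_mulVec, ← Units.val_mul, mul_inv_cancel, Units.val_one, one_mulVec]
  have hg' : ∀ x, (g⁻¹).val *ᵥ g.val *ᵥ x = x := by
    intro x; rw [mulVec_mulVec, ← Units.val_mul, inv_mul_cancel, Units.val_one, one_mulVec]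
  have hinv : ∀ x ∈ W.comap g.val.mulVecLin, B *ᵥ x ∈ W.comap g.val.mulVecLin := by
    intro x hx
    have := hW _ hx
    simp only [Submodule.mem_comap, mulVecLin_apply] at this ⊢
    rwa [← mulVec_mulVec, ← mulVec_mulVec, hg'] at this
  have hmem : ∀ y, (g⁻¹).val *ᵥ y ∈ W.comap g.val.mulVecLin ↔ y ∈ W := by
    intro y; simp
  rcases hB _ hinv with h | h
  · refine .inl <| (Submodule.eq_bot_iff _).2 fun y hy => ?_
    have := (hmem y).2 hy
    rw [h, Submodule.mem_bot] at this
    rw [← hg y, this, mulVec_zero]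
  · exact .inr <| Submodule.eq_top_iff'.2 fun y => (hmem y).1 (h ▸ Submodule.mem_top)

theorem HasOnlyTrivialInvariantSubspaces.exists_apply_ne_zero
    (hB : B.HasOnlyTrivialInvariantSubspaces) {T : Set ι} (hT : T.Nonempty) (hTc : Tᶜ.Nonempty) :
    ∃ j ∈ T, ∃ k ∉ T, B j k ≠ 0 := by
  by_contra! hzero
  let W : Submodule F (ι → F) := Submodule.pi T fun _ : ι => (⊥ : Submodule F F)
  have hmem : ∀ x, x ∈ W ↔ ∀ j ∈ T, x j = 0 := by simp [W, Submodule.mem_pi]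
  classical
  have hinv : ∀ x ∈ W, B *ᵥ x ∈ W := by
    intro x hx
    rw [hmem] at hx ⊢
    intro j hj
    refine Finset.sum_eq_zero fun k _ => ?_
    by_cases hk : k ∈ T
    · simp [hx k hk]
    · simp [hzero j hj k hk]
  obtain ⟨j, hj⟩ := hT
  obtain ⟨k, hk⟩ := hTc
  rcases hB W hinv with h | h
  · have : Pi.single k 1 ∈ W :=
      (hmem _).2 fun i hi => Pi.single_eq_of_ne (ne_of_mem_of_not_mem hi hk) _
    simp [h] at this
  · simpa using (hmem _).1 (h ▸ Submodule.mem_top : Pi.single j 1 ∈ W) j hj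

theorem hasOnlyTrivialInvariantSubspaces_leftMulMatrix [DecidableEq ι] {L : Type*} [Field L]
    [Algebra F L] (b : Module.Basis ι F L) {γ : L} (hγ : Algebra.adjoin F {γ} = ⊤) :
    (Algebra.leftMulMatrix b γ).HasOnlyTrivialInvariantSubspaces := by
  intro W hW
  let W' : Submodule F L := W.comap b.equivFun.toLinearMap
  have hγW' : ∀ x ∈ W', γ * x ∈ W' := by
    intro x hx
    simpa [W', Algebra.leftMulMatrix_mulVec_repr] using hW _ hx
  have hideal : ∀ a : L, ∀ x ∈ W', a * x ∈ W' := by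
    intro a
    induction (hγ ▸ Algebra.mem_top : a ∈ Algebra.adjoin F {γ}) using Algebra.adjoin_induction with
    | mem x hx => rw [Set.mem_singleton_iff.1 hx]; exact hγW'
    | algebraMap r => intro x hx; simpa [Algebra.smul_def] using W'.smul_mem r hx
    | add x y _ _ hx hy => intro z hz; rw [add_mul]; exact W'.add_mem (hx z hz) (hy z hz)
    | mul x y _ _ hx hy => intro z hz; rw [mul_assoc]; exact hx _ (hy z hz)
  refine or_iff_not_imp_left.2 fun hW0 => Submodule.eq_top_iff'.2 fun y => ?_
  obtain ⟨x, hxW, hx0⟩ := Submodule.exists_mem_ne_zero_of_ne_bot hW0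
  have hmem : ∀ z, b.equivFun.symm z ∈ W' ↔ z ∈ W := fun z => by
    simp only [W', Submodule.mem_comap, LinearEquiv.coe_coe, LinearEquiv.apply_symm_apply]
  have hx0' : b.equivFun.symm x ≠ 0 := by
    simpa only [ne_eq, map_eq_zero_iff _ b.equivFun.symm.injective]
  have := hideal (b.equivFun.symm y * (b.equivFun.symm x)⁻¹) _ ((hmem x).2 hxW)
  rwa [inv_mul_cancel_right₀ hx0', hmem] at this

theorem exists_hasOnlyTrivialInvariantSubspaces (hn : n ≠ 0) :
    ∃ B : Matrix (Fin n) (Fin n) (ZMod p), B.HasOnlyTrivialInvariantSubspaces := by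
  obtain ⟨γ, hγ⟩ := Field.exists_primitive_element (ZMod p) (GaloisField p n)
  have hγ' : Algebra.adjoin (ZMod p) {γ} = ⊤ := by
    rw [← IntermediateField.adjoin_simple_toSubalgebra_of_isAlgebraic
      (Algebra.IsAlgebraic.isAlgebraic γ), hγ, IntermediateField.top_toSubalgebra]
  exact ⟨_, hasOnlyTrivialInvariantSubspaces_leftMulMatrix
    (Module.finBasisOfFinrankEq _ _ (GaloisField.finrank p hn)) hγ'⟩

end Matrix

namespace Matrix.GeneralLinearGroup

variable {ι R S : Type*} [Fintype ι] [DecidableEq ι] [CommRing R] [CommRing S]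

theorem map_mulVec_comp (f : R →+* S) (g : GL ι R) (x : ι → R) :
    (map f g).val *ᵥ (f ∘ x) = f ∘ (g.val *ᵥ x) :=
  funext fun i => (RingHom.map_mulVec f _ x i).symm

theorem conj_single_mulVec (h : GL ι S) (i j : ι) (x : ι → S) :
    ((h⁻¹).val * single i j 1 * h.val) *ᵥ x = (h.val *ᵥ x) j • (h⁻¹).val *ᵥ Pi.single i 1 := by
  rw [← mulVec_mulVec, ← mulVec_mulVec, single_mulVec_eq, one_mul, mulVec_smul]

theorem map_conj_single (f : R →+* S) (g : GL ι R) (i j : ι) :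
    ((g⁻¹).val * single i j 1 * g.val).map f =
      ((map f g)⁻¹).val * single i j 1 * (map f g).val := by
  rw [Matrix.map_mul, Matrix.map_mul, map_single, map_one, ← map_inv]
  rfl

end Matrix.GeneralLinearGroup

section IntegralCoordinates

variable {ι R K : Type*} [Fintype ι] [CommRing R] [IsDomain R] [Field K] [Algebra R K]
  [IsFractionRing R K]

theorem IsFractionRing.exists_algebraMap_comp_eq_smul (v : ι → K) :
    ∃ b : R, b ≠ 0 ∧ ∃ x : ι → R, algebraMap R K ∘ x = algebraMap R K b • v := by
  obtain ⟨b, hb⟩ := IsLocalization.exist_integer_multiples (nonZeroDivisors R) Finset.univ v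
  choose x hx using fun i => hb i (Finset.mem_univ i)
  refine ⟨b, nonZeroDivisors.coe_ne_zero b, x, funext fun i => ?_⟩
  simpa [Algebra.smul_def] using hx i

theorem Submodule.eq_of_forall_algebraMap_comp_mem_iff {V W : Submodule K (ι → K)}
    (h : ∀ x : ι → R, algebraMap R K ∘ x ∈ V ↔ algebraMap R K ∘ x ∈ W) : V = W := by
  ext v
  obtain ⟨b, hb, x, hx⟩ := IsFractionRing.exists_algebraMap_comp_eq_smul (R := R) v
  have hb' : algebraMap R K b ≠ 0 := by simpa using hb
  rw [← Submodule.smul_mem_iff V hb', ← Submodule.smul_mem_iff W hb', ← hx, h]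

variable [IsPrincipalIdealRing R] [DecidableEq ι] {k : Type*} [Field k]

theorem Submodule.exists_comap_pi_bot_eq (V : Submodule K (ι → K)) :
    ∃ (g : GL ι R) (T : Set ι),
      (Submodule.pi T fun _ : ι => (⊥ : Submodule K K)).comap
        (g.map (algebraMap R K) : Matrix ι ι K).mulVecLin = V := by
  let L : Submodule R (ι → R) := (V.restrictScalars R).comap ((Algebra.linearMap R K).compLeft ι)
  have hL : ∀ x, x ∈ L ↔ algebraMap R K ∘ x ∈ V := fun x => Iff.rfl
  have hsat : ∀ (r : R) (x : ι → R), r ≠ 0 → r • x ∈ L → x ∈ L := by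
    intro r x hr hx
    have hr' : algebraMap R K r ≠ 0 := by simpa using hr
    rw [hL, ← Submodule.smul_mem_iff V hr']
    convert (hL _).1 hx using 1
    ext i; simp [Algebra.smul_def]
  obtain ⟨m, snf⟩ := L.smithNormalForm (Pi.basisFun R ι)
  -- `L` is saturated, so it contains the basis vectors `bM (f i)` and not only `a i • bM (f i)`.
  have hbM : ∀ i, snf.bM (snf.f i) ∈ L := by
    intro i
    refine hsat (snf.a i) _ (fun h => snf.bN.ne_zero i (Subtype.ext ?_)) (snf.snf i ▸ (snf.bN i).2)
    simp [snf.snf i, h]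
  have hmemL : ∀ x, x ∈ L ↔ ∀ j ∉ Set.range snf.f, snf.bM.repr x j = 0 := by
    refine fun x => ⟨fun hx j hj => snf.repr_eq_zero_of_notMem_range ⟨x, hx⟩ hj, fun hx => ?_⟩
    rw [← snf.bM.sum_repr x]
    refine Submodule.sum_mem _ fun j _ => ?_
    by_cases hj : j ∈ Set.range snf.f
    · obtain ⟨i, rfl⟩ := hj
      exact L.smul_mem _ (hbM i)
    · simp [hx j hj]
  let g : GL ι R := @unitOfInvertible _ _ _ (snf.bM.invertibleToMatrix (Pi.basisFun R ι))
  have hg : ∀ x, (g : Matrix ι ι R) *ᵥ x = snf.bM.repr x := by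
    intro x
    have := (Pi.basisFun R ι).toMatrix_mulVec_repr snf.bM x
    rwa [show ⇑((Pi.basisFun R ι).repr x) = x from funext fun i => by simp] at this
  refine ⟨g, (Set.range snf.f)ᶜ,
    Submodule.eq_of_forall_algebraMap_comp_mem_iff (R := R) fun x => ?_⟩
  rw [← hL, hmemL]
  simp only [Submodule.mem_comap, Submodule.mem_pi, mulVecLin_apply,
    GeneralLinearGroup.map_mulVec_comp, hg, Function.comp_apply, Submodule.mem_bot,
    map_eq_zero_iff _ (IsFractionRing.injective R K), Set.mem_compl_iff]

theorem Matrix.HasOnlyTrivialInvariantSubspaces.exists_trace_mul_map_ne_zero (π : R →+* k)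
    {B : Matrix ι ι k} (hB : B.HasOnlyTrivialInvariantSubspaces) {V : Submodule K (ι → K)}
    (hV₀ : V ≠ ⊥) (hV₁ : V ≠ ⊤) :
    ∃ Z : Matrix ι ι R, (∀ x, Z.map (algebraMap R K) *ᵥ x ∈ V) ∧
      (∀ x ∈ V, Z.map (algebraMap R K) *ᵥ x = 0) ∧ trace (B * Z.map π) ≠ 0 := by
  obtain ⟨g, T, hgT⟩ := Submodule.exists_comap_pi_bot_eq (R := R) V
  set gK := GeneralLinearGroup.map (algebraMap R K) g
  have hmem : ∀ x, x ∈ V ↔ ∀ j ∈ T, (gK.val *ᵥ x) j = 0 := fun x => by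
    simp [← hgT, Submodule.mem_pi]
  have hT : T.Nonempty := by
    refine Set.nonempty_iff_ne_empty.2 fun hT => hV₁ ?_
    exact Submodule.eq_top_iff'.2 fun x => (hmem x).2 (by simp [hT])
  have hTc : Tᶜ.Nonempty := by
    refine Set.nonempty_compl.2 fun hT => hV₀ ((Submodule.eq_bot_iff V).2 fun x hx => ?_)
    have hgx : gK.val *ᵥ x = 0 := funext fun j => (hmem x).1 hx j (hT ▸ trivial)
    simpa using congrArg ((gK⁻¹).val *ᵥ ·) hgx
  obtain ⟨j, hj, i, hi, hji⟩ := (hB.conj (GeneralLinearGroup.map π g)).exists_apply_ne_zero hT hTc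
  refine ⟨(g⁻¹).val * single i j 1 * g.val, fun x => ?_, fun x hx => ?_, ?_⟩
  · rw [GeneralLinearGroup.map_conj_single, GeneralLinearGroup.conj_single_mulVec]
    refine V.smul_mem _ ((hmem _).2 fun j' hj' => ?_)
    rw [mulVec_mulVec, ← Units.val_mul, mul_inv_cancel, Units.val_one, one_mulVec]
    exact Pi.single_eq_of_ne (ne_of_mem_of_not_mem hj' hi) _
  · rw [GeneralLinearGroup.map_conj_single, GeneralLinearGroup.conj_single_mulVec,
      (hmem x).1 hx j hj, zero_smul]
  · rwa [GeneralLinearGroup.map_conj_single, ← mul_assoc, ← mul_assoc, trace_mul_cycle,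
      ← mul_assoc, trace_mul_single, MulOpposite.op_one, one_smul]

end IntegralCoordinates

namespace ProperFlag

variable (F : ProperFlag p n)

theorem val_one : ((1 : Fin (F.r + 1)) : ℕ) = 1 := by
  rw [Fin.val_one', Nat.mod_eq_of_lt (by have := F.two_le_r; omega)]

theorem V_one_ne_bot : F.V 1 ≠ ⊥ := by
  have h : (0 : Fin (F.r + 1)) < 1 := by rw [Fin.lt_def, F.val_one]; simp
  simpa [F.zero_eq_bot, bot_lt_iff_ne_bot] using F.strictMono h

theorem V_one_ne_top : F.V 1 ≠ ⊤ := by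
  have := F.two_le_r
  have h : (1 : Fin (F.r + 1)) < ⟨2, by omega⟩ := by rw [Fin.lt_def, F.val_one]; simp
  exact (F.strictMono h).ne_top

theorem mem_nil_of_mulVec_mem_of_mulVec_eq_zero {U : Matrix (Fin n) (Fin n) ℚ_[p]}
    (hrange : ∀ x, U *ᵥ x ∈ F.V 1) (hker : ∀ x ∈ F.V 1, U *ᵥ x = 0) : U ∈ F.nil := by
  rintro ⟨_ | i, hi⟩ x hx
  · rw [show Fin.succ ⟨0, hi⟩ = (1 : Fin (F.r + 1)) from Fin.ext F.val_one.symm] at hx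
    rw [hker x hx]
    exact zero_mem _
  · refine F.strictMono.monotone ?_ (hrange x)
    rw [Fin.le_def, F.val_one]
    simp

end ProperFlag

theorem MeasureTheory.integral_eq_zero_of_add_right_eq_smul {G E 𝕜 : Type*} [AddGroup G]
    [MeasurableSpace G] [MeasurableAdd G] {μ : Measure G} [μ.IsAddRightInvariant]
    [NormedAddCommGroup E] [NormedSpace ℝ E] [NormedDivisionRing 𝕜] [Module 𝕜 E] [NormSMulClass 𝕜 E]
    [SMulCommClass ℝ 𝕜 E] {f : G → E} {a : G} {c : 𝕜} (hc : c ≠ 1) (hf : ∀ x, f (x + a) = c • f x) :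
    ∫ x, f x ∂μ = 0 := by
  have h : c • ∫ x, f x ∂μ = ∫ x, f x ∂μ := by
    rw [← integral_smul]
    simp_rw [← hf]
    exact integral_add_right_eq_self f a
  have h' : (c - 1) • ∫ x, f x ∂μ = 0 := by rw [sub_smul, one_smul, h, sub_self]
  exact (smul_eq_zero.1 h').resolve_left (sub_ne_zero.2 hc)

theorem AddChar.extend_add_apply {A B M F : Type*} [AddGroup A] [AddGroup B] [CommMonoidWithZero M]
    [FunLike F A B] [AddMonoidHomClass F A B] (ψ : AddChar A M) {ι : F}
    (hι : Function.Injective ι) (y : B) (a : A) :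
    Function.extend ι ψ 0 (y + ι a) = ψ a * Function.extend ι ψ 0 y := by
  by_cases hy : ∃ b, ι b = y
  · obtain ⟨b, rfl⟩ := hy
    rw [← map_add, hι.extend_apply, hι.extend_apply, map_add_eq_mul, mul_comm]
  · have hya : ¬∃ c, ι c = y + ι a := fun ⟨c, hc⟩ =>
      hy ⟨c - a, by rw [map_sub, hc, add_sub_cancel_right]⟩
    rw [Function.extend_apply' _ _ _ hy, Function.extend_apply' _ _ _ hya, Pi.zero_apply,
      Pi.zero_apply, mul_zero]

theorem IsLocallyConstant.of_eventually_add_eq {G α : Type*} [TopologicalSpace G] [AddGroup G]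
    [IsTopologicalAddGroup G] {f : G → α} (h : ∀ᶠ u in 𝓝 0, ∀ x, f (x + u) = f x) :
    IsLocallyConstant f :=
  (IsLocallyConstant.iff_eventually_eq f).2 fun x => by
    rw [← map_add_left_nhds_zero x, Filter.eventually_map]
    exact h.mono fun u hu => hu x

theorem PadicInt.eventually_nhds_zero_exists_toZMod_eq_zero :
    ∀ᶠ x in 𝓝 (0 : ℚ_[p]), ∃ z : ℤ_[p], algebraMap ℤ_[p] ℚ_[p] z = x ∧ PadicInt.toZMod z = 0 := by
  filter_upwards [Metric.ball_mem_nhds (0 : ℚ_[p]) one_pos] with x hx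
  rw [mem_ball_zero_iff] at hx
  let z : ℤ_[p] := ⟨x, hx.le⟩
  refine ⟨z, rfl, ?_⟩
  rw [← RingHom.mem_ker, PadicInt.ker_toZMod, IsLocalRing.mem_maximalIdeal, PadicInt.mem_nonunits]
  exact hx

section CuspForm

def traceChar (B : Matrix (Fin n) (Fin n) (ZMod p)) : AddChar (Matrix (Fin n) (Fin n) ℤ_[p]) ℂ where
  toFun Z := ZMod.stdAddChar (trace (B * Z.map PadicInt.toZMod))
  map_zero_eq_one' := by simp
  map_add_eq_mul' Z W := by simp [Matrix.map_add, Matrix.mul_add, AddChar.map_add_eq_mul]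

def extendTraceChar (B : Matrix (Fin n) (Fin n) (ZMod p)) : Matrix (Fin n) (Fin n) ℚ_[p] → ℂ :=
  Function.extend (fun Z : Matrix (Fin n) (Fin n) ℤ_[p] => Z.map (algebraMap ℤ_[p] ℚ_[p]))
    (traceChar B) 0

variable (B : Matrix (Fin n) (Fin n) (ZMod p))

theorem extendTraceChar_add_apply (Y : Matrix (Fin n) (Fin n) ℚ_[p])
    (Z : Matrix (Fin n) (Fin n) ℤ_[p]) :
    extendTraceChar B (Y + Z.map (algebraMap ℤ_[p] ℚ_[p])) = traceChar B Z * extendTraceChar B Y :=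
  (traceChar B).extend_add_apply (ι := (algebraMap ℤ_[p] ℚ_[p]).mapMatrix)
    (Matrix.map_injective (IsFractionRing.injective ℤ_[p] ℚ_[p])) Y Z

theorem extendTraceChar_map_algebraMap (Z : Matrix (Fin n) (Fin n) ℤ_[p]) :
    extendTraceChar B (Z.map (algebraMap ℤ_[p] ℚ_[p])) = traceChar B Z :=
  (Matrix.map_injective (IsFractionRing.injective ℤ_[p] ℚ_[p])).extend_apply _ _ Z

theorem extendTraceChar_zero : extendTraceChar B 0 = 1 := by
  have h := extendTraceChar_map_algebraMap B 0
  rwa [Matrix.map_zero _ (map_zero _), AddChar.map_zero_eq_one] at h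

theorem isLocallyConstant_extendTraceChar : IsLocallyConstant (extendTraceChar B) := by
  refine .of_eventually_add_eq ?_
  have h : ∀ i j, ∀ᶠ X in 𝓝 (0 : Matrix (Fin n) (Fin n) ℚ_[p]),
      ∃ z : ℤ_[p], algebraMap ℤ_[p] ℚ_[p] z = X i j ∧ PadicInt.toZMod z = 0 := fun i j =>
    ((continuous_id.matrix_elem i j).tendsto' 0 0 rfl).eventually
      PadicInt.eventually_nhds_zero_exists_toZMod_eq_zero
  filter_upwards [Filter.eventually_all.2 fun i => Filter.eventually_all.2 (h i)] with X hX Y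
  choose Z hZ hZ0 using hX
  have hX : X = (Matrix.of Z).map (algebraMap ℤ_[p] ℚ_[p]) := by ext i j; exact (hZ i j).symm
  have hZ1 : traceChar B (Matrix.of Z) = 1 := by
    have : (Matrix.of Z).map PadicInt.toZMod = 0 := by ext i j; exact hZ0 i j
    simp [traceChar, this]
  rw [hX, extendTraceChar_add_apply, hZ1, one_mul]

theorem hasCompactSupport_extendTraceChar : HasCompactSupport (extendTraceChar B) := by
  have : CompactSpace (Matrix (Fin n) (Fin n) ℤ_[p]) :=
    inferInstanceAs (CompactSpace (Fin n → Fin n → ℤ_[p]))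
  have hcont : Continuous fun Z : Matrix (Fin n) (Fin n) ℤ_[p] => Z.map (algebraMap ℤ_[p] ℚ_[p]) :=
    continuous_id.matrix_map continuous_subtype_val
  have hK := isCompact_range hcont
  exact .intro' hK hK.isClosed fun X hX => Function.extend_apply' _ _ _ hX

theorem isLieCuspForm_extendTraceChar (hB : B.HasOnlyTrivialInvariantSubspaces) :
    IsLieCuspForm (extendTraceChar B) := by
  refine ⟨isLocallyConstant_extendTraceChar B, hasCompactSupport_extendTraceChar B,
    fun F μ _ X => ?_⟩
  obtain ⟨Z, hrange, hker, htr⟩ := hB.exists_trace_mul_map_ne_zero PadicInt.toZMod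
    F.V_one_ne_bot F.V_one_ne_top
  have hZ : Z.map (algebraMap ℤ_[p] ℚ_[p]) ∈ F.nil :=
    F.mem_nil_of_mulVec_mem_of_mulVec_eq_zero hrange hker
  have hψ : traceChar B Z ≠ 1 := fun h =>
    htr (ZMod.injective_stdAddChar (h.trans (AddChar.map_zero_eq_one _).symm))
  refine integral_eq_zero_of_add_right_eq_smul (a := ⟨_, hZ⟩) hψ fun U => ?_
  simpa [add_assoc] using extendTraceChar_add_apply B (X + (U : Matrix (Fin n) (Fin n) ℚ_[p])) Z

end CuspForm

/-- For every prime `p` and `n ≥ 1`, there exists a nonzero locally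
constant compactly supported Lie algebra cusp form on `M_n(ℚ_p)`. -/
theorem exists_nonzero_lie_cusp_form (p : ℕ) [Fact p.Prime] (n : ℕ) (hn : 1 ≤ n) :
    ∃ φ : Matrix (Fin n) (Fin n) ℚ_[p] → ℂ, φ ≠ 0 ∧ IsLieCuspForm φ := by
  obtain ⟨B, hB⟩ := Matrix.exists_hasOnlyTrivialInvariantSubspaces (p := p) (n := n) (by omega)
  exact ⟨extendTraceChar B, fun h => by simpa [h] using extendTraceChar_zero B,
    isLieCuspForm_extendTraceChar B hB⟩
end
end

section
/- Let G be a Hausdorff locally compact topological group, let N be a closed subgroup of G equipped with a Haar measure μ, and let (N_k)_{k≥0} be an increasing sequence of compact open subgroups of N with N = ⋃_{k≥0} N_k. Let f : G → ℂ be a continuous function with compact support such that ∫_N f(xu) dμ(u) = 0 for every x ∈ G. Then there exists k ≥ 0 such that ∫_{N_k} f(xu) dμ(u) = 0 for every x ∈ G. -/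
open MeasureTheory
open scoped Pointwise

/-!
Let `K` be the support of `f`. The set of `u ∈ N` lying in `K⁻¹ K` is compact, so it lies in a
single `N_k`. Then for each `x` the support of `u ↦ f (x u)` either misses `N_k` or is contained
in it: if `f (x u₀) ≠ 0` with `u₀ ∈ N_k`, every `u` with `f (x u) ≠ 0` satisfies
`u₀⁻¹ u = (x u₀)⁻¹ (x u) ∈ K⁻¹ K`, hence `u ∈ u₀ N_k = N_k`. So the integral over `N_k` is
either `0` or the integral over `N`.
-/

theorem inv_mul_mem_inv_mul_of_mul_mem {G : Type*} [Group G] {s : Set G} {x a b : G}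
    (ha : x * a ∈ s) (hb : x * b ∈ s) : a⁻¹ * b ∈ s⁻¹ * s := by
  have : a⁻¹ * b = (x * a)⁻¹ * (x * b) := by group
  exact this ▸ Set.mul_mem_mul (Set.inv_mem_inv.2 ha) hb

theorem Subgroup.support_subset_or_disjoint_of_inv_mul_mem {N E : Type*} [Group N] [Zero E]
    (H : Subgroup N) {g : N → E}
    (hg : ∀ u v, g u ≠ 0 → g v ≠ 0 → u⁻¹ * v ∈ H) :
    Function.support g ⊆ H ∨ Disjoint (Function.support g) H := by
  by_cases hmeet : ∃ u₀ ∈ H, g u₀ ≠ 0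
  · obtain ⟨u₀, hu₀H, hu₀⟩ := hmeet
    refine Or.inl fun v hv => ?_
    simpa using H.mul_mem hu₀H (hg u₀ v hu₀ hv)
  · push Not at hmeet
    exact Or.inr <| Set.disjoint_left.2 fun u hu huH => hu (hmeet u huH)

theorem Subgroup.setIntegral_eq_zero_of_inv_mul_mem {N E : Type*} [Group N] [MeasurableSpace N]
    [NormedAddCommGroup E] [NormedSpace ℝ E] (μ : Measure N) (H : Subgroup N) {g : N → E}
    (hg : ∀ u v, g u ≠ 0 → g v ≠ 0 → u⁻¹ * v ∈ H) (h0 : ∫ u, g u ∂μ = 0) :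
    ∫ u in (H : Set N), g u ∂μ = 0 := by
  rcases H.support_subset_or_disjoint_of_inv_mul_mem hg with hsub | hdisj
  · rw [setIntegral_eq_integral_of_forall_compl_eq_zero fun u hu =>
      Function.notMem_support.1 fun hsupp => hu (hsub hsupp), h0]
  · exact setIntegral_eq_zero_of_forall_eq_zero fun u huH =>
      Function.notMem_support.1 fun hsupp => Set.disjoint_left.1 hdisj hsupp huH

theorem Subgroup.isCompact_preimage_inv_mul_tsupport {G E : Type*} [Group G]
    [TopologicalSpace G] [ContinuousMul G] [ContinuousInv G] [Zero E] {f : G → E}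
    (hf : HasCompactSupport f) (N : Subgroup G) (hN : IsClosed (N : Set G)) :
    IsCompact {u : N | (u : G) ∈ (tsupport f)⁻¹ * tsupport f} :=
  hN.isClosedEmbedding_subtypeVal.isCompact_preimage (hf.isCompact.inv.mul hf.isCompact)

theorem exists_k_integral_vanishes_general
    {G : Type*} [Group G] [TopologicalSpace G] [IsTopologicalGroup G]
    (N : Subgroup G) (hNclosed : IsClosed (N : Set G))
    [MeasurableSpace N] (μ : Measure N)
    (Nk : ℕ → Subgroup G)
    (hopen : ∀ k, IsOpen {u : N | (u : G) ∈ Nk k})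
    (hmono : Monotone Nk)
    (hunion : (N : Set G) = ⋃ k, (Nk k : Set G))
    (f : G → ℂ) (hfsupp : HasCompactSupport f)
    (hvanish : ∀ x : G, ∫ u : N, f (x * (u : G)) ∂μ = 0) :
    ∃ k : ℕ, ∀ x : G, ∫ u in {u : N | (u : G) ∈ Nk k}, f (x * (u : G)) ∂μ = 0 := by
  have hcover :
      {u : N | (u : G) ∈ (tsupport f)⁻¹ * tsupport f} ⊆ ⋃ k, {u : N | (u : G) ∈ Nk k} :=
    fun u _ => by simpa using (hunion ▸ u.2 : (u : G) ∈ ⋃ k, (Nk k : Set G))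
  obtain ⟨k, hk⟩ := (N.isCompact_preimage_inv_mul_tsupport hfsupp hNclosed)
    |>.elim_directed_cover _ hopen hcover (Monotone.directed_le fun i j hij u hu => hmono hij hu)
  refine ⟨k, fun x => ((Nk k).comap N.subtype).setIntegral_eq_zero_of_inv_mul_mem μ ?_ (hvanish x)⟩
  intro u v hu hv
  exact hk (inv_mul_mem_inv_mul_of_mul_mem (subset_tsupport f hu) (subset_tsupport f hv))

/-- Let `G` be a Hausdorff locally compact topological group, `N` a
closed subgroup equipped with a Haar measure `μ`, and `(N_k)` an increasing sequence of
compact open subgroups of `N` with `N = ⋃ k, N_k`.  If `f : G → ℂ` is continuous with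
compact support and `∫_N f(xu) dμ(u) = 0` for every `x`, then there is `k` such that
`∫_{N_k} f(xu) dμ(u) = 0` for every `x`. -/
theorem exists_k_integral_vanishes
    {G : Type*} [Group G] [TopologicalSpace G] [IsTopologicalGroup G] [T2Space G]
    [LocallyCompactSpace G]
    (N : Subgroup G) (hNclosed : IsClosed (N : Set G))
    [MeasurableSpace N] [BorelSpace N] (μ : Measure N) [μ.IsHaarMeasure]
    (Nk : ℕ → Subgroup G)
    (hle : ∀ k, Nk k ≤ N)
    (hcompact : ∀ k, IsCompact (Nk k : Set G))
    (hopen : ∀ k, IsOpen {u : N | (u : G) ∈ Nk k})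
    (hmono : Monotone Nk)
    (hunion : (N : Set G) = ⋃ k, (Nk k : Set G))
    (f : G → ℂ) (hfcont : Continuous f) (hfsupp : HasCompactSupport f)
    (hvanish : ∀ x : G, ∫ u : N, f (x * (u : G)) ∂μ = 0) :
    ∃ k : ℕ, ∀ x : G, ∫ u in {u : N | (u : G) ∈ Nk k}, f (x * (u : G)) ∂μ = 0 :=
  exists_k_integral_vanishes_general N hNclosed μ Nk hopen hmono hunion f hfsupp hvanish
end

section
/- Let p be a prime and n ≥ 1. The set E of matrices X ∈ M_n(ℚ_p) whose characteristic polynomial is irreducible over ℚ_p is a nonempty open subset of M_n(ℚ_p). Moreover, E is invariant under conjugation by GL_n(ℚ_p). -/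
/-!
A monic polynomial of degree `n` is determined by its `n` lower coefficients, and those of the
characteristic polynomial are polynomial, hence continuous, functions of the matrix entries. The
reducible monic polynomials of degree `n` form the union over `0 < d < n` of the images of the
multiplication maps on pairs of monic polynomials of degrees `d` and `n - d`. Over a
nonarchimedean field the Gauss norm is multiplicative and at least `1` on monic polynomials, so the
coefficients of monic factors are bounded by those of the product: the multiplication maps are
proper and, over a locally compact field, have closed images. The Eisenstein polynomial
`X ^ n - p` is irreducible over `ℚ_p`, and it is the characteristic polynomial of multiplication by
its root on `ℚ_p[X] ⧸ (X ^ n - p)`. Conjugation preserves characteristic polynomials.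
-/

open Polynomial

theorem isProperMap_of_norm_le_max {E F : Type*} [NormedAddCommGroup E] [ProperSpace E]
    [NormedAddCommGroup F] {f : E → F} (hf : Continuous f) (C : ℝ)
    (h : ∀ x, ‖x‖ ≤ max C ‖f x‖) : IsProperMap f := by
  refine isProperMap_iff_isCompact_preimage.2 ⟨hf, fun L hL => ?_⟩
  obtain ⟨r, hr⟩ := hL.isBounded.exists_norm_le
  refine Metric.isCompact_of_isClosed_isBounded (hL.isClosed.preimage hf) ?_
  exact isBounded_iff_forall_norm_le.2
    ⟨max C r, fun x hx => (h x).trans (max_le_max le_rfl (hr _ hx))⟩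

namespace Polynomial

variable {R : Type*}

open scoped Classical in
noncomputable def monicOfFn [Semiring R] (d : ℕ) (c : Fin d → R) : R[X] := X ^ d + ofFn d c

noncomputable def monicMulCoeffs [Semiring R] (n d e : ℕ) (bc : (Fin d → R) × (Fin e → R)) :
    Fin n → R :=
  toFn n (monicOfFn d bc.1 * monicOfFn e bc.2)

section Semiring

variable [Semiring R] {d : ℕ}

theorem coeff_monicOfFn (c : Fin d → R) (k : ℕ) :
    (monicOfFn d c).coeff k = if h : k < d then c ⟨k, h⟩ else if k = d then 1 else 0 := by
  classical
  split_ifs with hk hd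
  · simp [monicOfFn, coeff_X_pow, hk.ne, ofFn_coeff_eq_val_of_lt _ hk]
  · simp [monicOfFn, hd, ofFn_coeff_eq_zero_of_ge]
  · simp [monicOfFn, coeff_X_pow, hd, ofFn_coeff_eq_zero_of_ge _ (not_lt.1 hk)]

theorem toFn_monicOfFn (c : Fin d → R) : toFn d (monicOfFn d c) = c := by
  ext i
  simp [toFn, coeff_monicOfFn]

theorem monic_monicOfFn (c : Fin d → R) : (monicOfFn d c).Monic := by
  classical
  exact monic_X_pow_add (ofFn_degree_lt c)

theorem natDegree_monicOfFn [Nontrivial R] (c : Fin d → R) : (monicOfFn d c).natDegree = d := by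
  classical
  rw [monicOfFn, natDegree_add_eq_left_of_degree_lt] <;> simp [ofFn_degree_lt]

theorem monicOfFn_toFn {g : R[X]} (hg : g.Monic) (hd : g.natDegree = d) :
    monicOfFn d (toFn d g) = g := by
  ext k
  rw [coeff_monicOfFn]
  split_ifs with hk hkd
  · rfl
  · rw [hkd, ← hd, hg.coeff_natDegree]
  · exact (coeff_eq_zero_of_natDegree_lt (by omega)).symm

variable [TopologicalSpace R]

theorem continuous_coeff_monicOfFn (k : ℕ) :
    Continuous fun c : Fin d → R => (monicOfFn d c).coeff k := by
  simp_rw [coeff_monicOfFn]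
  split_ifs
  · exact continuous_apply _
  all_goals exact continuous_const

theorem continuous_monicMulCoeffs [IsTopologicalSemiring R] (n d e : ℕ) :
    Continuous (monicMulCoeffs (R := R) n d e) := by
  refine continuous_pi fun k => ?_
  simp_rw [monicMulCoeffs, toFn, LinearMap.pi_apply, lcoeff_apply, coeff_mul]
  exact continuous_finsetSum _ fun ij _ =>
    ((continuous_coeff_monicOfFn ij.1).comp continuous_fst).mul
      ((continuous_coeff_monicOfFn ij.2).comp continuous_snd)

end Semiring

theorem not_irreducible_monicOfFn_iff [CommSemiring R] [NoZeroDivisors R] [Nontrivial R] {n : ℕ}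
    (hn : 0 < n) (c : Fin n → R) :
    ¬Irreducible (monicOfFn n c) ↔
      ∃ d ∈ Finset.Ioo 0 n, c ∈ Set.range (monicMulCoeffs n d (n - d)) := by
  have hne_one : monicOfFn n c ≠ 1 := fun h =>
    hn.ne' (by simpa [h] using (natDegree_monicOfFn c).symm)
  simp only [(monic_monicOfFn c).irreducible_iff_natDegree, hne_one, ne_eq, not_false_eq_true,
    true_and, not_forall, not_or, exists_prop, Finset.mem_Ioo, Set.mem_range]
  constructor
  · rintro ⟨g, h, hg, hh, hgh, hg0, hh0⟩
    have hdeg : g.natDegree + h.natDegree = n := by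
      rw [← hg.natDegree_mul hh, hgh, natDegree_monicOfFn]
    refine ⟨g.natDegree, ⟨by omega, by omega⟩, (toFn _ g, toFn _ h), ?_⟩
    rw [monicMulCoeffs, monicOfFn_toFn hg rfl, monicOfFn_toFn hh (by omega), hgh, toFn_monicOfFn]
  · rintro ⟨d, ⟨hd0, hdn⟩, bc, rfl⟩
    have hmonic := (monic_monicOfFn bc.1).mul (monic_monicOfFn bc.2)
    refine ⟨_, _, monic_monicOfFn bc.1, monic_monicOfFn bc.2, ?_, ?_⟩
    · rw [monicMulCoeffs, monicOfFn_toFn hmonic]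
      rw [(monic_monicOfFn _).natDegree_mul (monic_monicOfFn _), natDegree_monicOfFn,
        natDegree_monicOfFn]
      omega
    · rw [natDegree_monicOfFn, natDegree_monicOfFn]
      omega

section Ultrametric

variable {K : Type*} [NormedField K]

theorem norm_coeff_le_gaussNorm (g : K[X]) (i : ℕ) :
    ‖g.coeff i‖ ≤ g.gaussNorm (NormedField.toAbsoluteValue K) 1 := by
  have := g.le_gaussNorm (NormedField.toAbsoluteValue K) zero_le_one i
  rwa [one_pow, mul_one] at this

theorem Monic.gaussNorm_le_max_one_norm_toFn {f : K[X]} (hf : f.Monic) {n : ℕ}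
    (hn : f.natDegree = n) :
    f.gaussNorm (NormedField.toAbsoluteValue K) 1 ≤ max 1 ‖toFn n f‖ := by
  obtain ⟨k, hk⟩ := f.exists_eq_gaussNorm (NormedField.toAbsoluteValue K) 1
  rw [hk, one_pow, mul_one]
  change ‖f.coeff k‖ ≤ _
  rcases lt_trichotomy k n with hkn | rfl | hnk
  · exact le_max_of_le_right (norm_le_pi_norm (toFn n f) ⟨k, hkn⟩)
  · simp [← hn, hf.coeff_natDegree]
  · simp [coeff_eq_zero_of_natDegree_lt (hn ▸ hnk : f.natDegree < k)]

theorem norm_le_gaussNorm_monicOfFn {d : ℕ} (c : Fin d → K) :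
    ‖c‖ ≤ (monicOfFn d c).gaussNorm (NormedField.toAbsoluteValue K) 1 := by
  refine (pi_norm_le_iff_of_nonneg (gaussNorm_nonneg _ _ zero_le_one)).2 fun i => ?_
  simpa [coeff_monicOfFn] using (monicOfFn d c).norm_coeff_le_gaussNorm i

variable [IsUltrametricDist K]

theorem gaussNorm_le_gaussNorm_mul_of_monic (g : K[X]) {h : K[X]} (hh : h.Monic) :
    g.gaussNorm (NormedField.toAbsoluteValue K) 1 ≤
      (g * h).gaussNorm (NormedField.toAbsoluteValue K) 1 := by
  rw [gaussNorm_mul IsUltrametricDist.isNonarchimedean_norm one_pos]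
  have : 1 ≤ h.gaussNorm (NormedField.toAbsoluteValue K) 1 := by
    simpa [hh.coeff_natDegree] using h.norm_coeff_le_gaussNorm h.natDegree
  exact le_mul_of_one_le_right (gaussNorm_nonneg _ _ zero_le_one) this

theorem norm_le_max_one_norm_monicMulCoeffs {n d e : ℕ} (hde : d + e = n)
    (bc : (Fin d → K) × (Fin e → K)) : ‖bc‖ ≤ max 1 ‖monicMulCoeffs n d e bc‖ := by
  have hg := monic_monicOfFn bc.1
  have hh := monic_monicOfFn bc.2
  have hprod : (monicOfFn d bc.1 * monicOfFn e bc.2).gaussNorm (NormedField.toAbsoluteValue K) 1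
      ≤ max 1 ‖monicMulCoeffs n d e bc‖ :=
    (hg.mul hh).gaussNorm_le_max_one_norm_toFn
      (by rw [hg.natDegree_mul hh, natDegree_monicOfFn, natDegree_monicOfFn, hde])
  refine norm_prod_le_iff.2 ⟨?_, ?_⟩
  · exact (norm_le_gaussNorm_monicOfFn bc.1).trans
      ((gaussNorm_le_gaussNorm_mul_of_monic _ hh).trans hprod)
  · rw [mul_comm] at hprod
    exact (norm_le_gaussNorm_monicOfFn bc.2).trans
      ((gaussNorm_le_gaussNorm_mul_of_monic _ hg).trans hprod)

end Ultrametric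

theorem isOpen_setOf_irreducible_monicOfFn {K : Type*} [NormedField K] [IsUltrametricDist K]
    [ProperSpace K] (n : ℕ) : IsOpen {c : Fin n → K | Irreducible (monicOfFn n c)} := by
  rcases n.eq_zero_or_pos with rfl | hn
  · have (c : Fin 0 → K) : ¬Irreducible (monicOfFn 0 c) := by
      rw [(monic_monicOfFn c).natDegree_eq_zero.1 (natDegree_monicOfFn c)]
      exact not_irreducible_one
    simp [this]
  have hcompl : {c : Fin n → K | Irreducible (monicOfFn n c)}ᶜ =
      ⋃ d ∈ Finset.Ioo 0 n, Set.range (monicMulCoeffs n d (n - d)) := by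
    ext c
    simpa using not_irreducible_monicOfFn_iff hn c
  rw [← isClosed_compl_iff, hcompl]
  refine Set.Finite.isClosed_biUnion (Finset.finite_toSet _) fun d hd => ?_
  have hdn : d + (n - d) = n := Nat.add_sub_of_le (Finset.mem_Ioo.1 hd).2.le
  exact (isProperMap_of_norm_le_max (continuous_monicMulCoeffs n d (n - d)) 1
    (norm_le_max_one_norm_monicMulCoeffs hdn)).isClosed_range

end Polynomial

namespace Matrix

variable {ι : Type*} [Fintype ι] [DecidableEq ι]

theorem continuous_charpoly_coeff {R : Type*} [CommRing R] [TopologicalSpace R]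
    [IsTopologicalRing R] (k : ℕ) : Continuous fun A : Matrix ι ι R => A.charpoly.coeff k := by
  have h (A : Matrix ι ι R) : A.charpoly.coeff k =
      MvPolynomial.eval (fun ij : ι × ι => A ij.1 ij.2) ((charpoly.univ R ι).coeff k) :=
    (charpoly.univ_coeff_eval₂Hom ι (RingHom.id R) (fun ij : ι × ι => A ij.1 ij.2) k).symm
  simp_rw [h]
  exact (MvPolynomial.continuous_eval _).comp (by fun_prop)

theorem isOpen_setOf_irreducible_charpoly {K : Type*} [NormedField K] [IsUltrametricDist K]
    [ProperSpace K] : IsOpen {A : Matrix ι ι K | Irreducible A.charpoly} := by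
  have hcharpoly (A : Matrix ι ι K) :
      monicOfFn (Fintype.card ι) (toFn (Fintype.card ι) A.charpoly) = A.charpoly :=
    monicOfFn_toFn A.charpoly_monic A.charpoly_natDegree_eq_dim
  have hcont : Continuous fun A : Matrix ι ι K => toFn (Fintype.card ι) A.charpoly :=
    continuous_pi fun k => continuous_charpoly_coeff k
  simpa only [Set.preimage_ofPred_eq, hcharpoly] using
    (isOpen_setOf_irreducible_monicOfFn (K := K) _).preimage hcont

theorem exists_charpoly_eq {K : Type*} [Field K] {f : K[X]} (hf : f.Monic) {n : ℕ}
    (hn : f.natDegree = n) : ∃ A : Matrix (Fin n) (Fin n) K, A.charpoly = f := by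
  subst hn
  let pb := AdjoinRoot.powerBasis hf.ne_zero
  exact ⟨Algebra.leftMulMatrix pb.basis pb.gen,
    (charpoly_leftMulMatrix pb).trans (AdjoinRoot.minpoly_powerBasis_gen_of_monic hf)⟩

end Matrix

theorem irreducible_X_pow_sub_C_of_prime {R K : Type*} [CommRing R] [IsDomain R]
    [IsIntegrallyClosed R] [Field K] [Algebra R K] [IsFractionRing R K] {π : R} (hπ : Prime π)
    {n : ℕ} (hn : n ≠ 0) : Irreducible (X ^ n - C (algebraMap R K π)) := by
  have hmonic : (X ^ n - C π : R[X]).Monic := monic_X_pow_sub_C π hn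
  have hP : (Ideal.span {π}).IsPrime := (Ideal.span_singleton_prime hπ.ne_zero).2 hπ
  have hdeg : (X ^ n - C π : R[X]).degree = n := degree_X_pow_sub_C (Nat.pos_of_ne_zero hn) π
  have hirr : Irreducible (X ^ n - C π : R[X]) := by
    refine irreducible_of_eisenstein_criterion hP ?_ ?_ ?_ ?_ hmonic.isPrimitive
    · rw [hmonic.leadingCoeff, ← Ideal.eq_top_iff_one]
      exact hP.ne_top
    · intro m hm
      rw [hdeg, Nat.cast_lt] at hm
      simp only [coeff_sub, coeff_X_pow, coeff_C, if_neg hm.ne, zero_sub, neg_mem_iff]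
      split_ifs
      · exact Ideal.mem_span_singleton_self π
      · exact zero_mem _
    · rw [hdeg]
      exact_mod_cast Nat.pos_of_ne_zero hn
    · rw [Ideal.span_singleton_pow, Ideal.mem_span_singleton]
      simp only [coeff_sub, coeff_X_pow, coeff_C, if_neg hn.symm, if_pos, zero_sub, dvd_neg]
      exact fun h => hπ.not_isUnit
        (isUnit_of_dvd_one ((mul_dvd_mul_iff_left hπ.ne_zero).1 (by simpa [sq] using h)))
  simpa using hmonic.irreducible_iff_irreducible_map_fraction_map.1 hirr

/-- The set of matrices in `M_n(ℚ_p)` with irreducible characteristic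
polynomial is a nonempty open subset, invariant under conjugation by `GL_n(ℚ_p)`. -/
theorem irreducible_charpoly_nonempty_open_conjinvariant
    (p : ℕ) [Fact p.Prime] (n : ℕ) (hn : 1 ≤ n) :
    ({X : Matrix (Fin n) (Fin n) ℚ_[p] | Irreducible X.charpoly}).Nonempty ∧
    IsOpen {X : Matrix (Fin n) (Fin n) ℚ_[p] | Irreducible X.charpoly} ∧
    (∀ g : GL (Fin n) ℚ_[p], ∀ X : Matrix (Fin n) (Fin n) ℚ_[p],
      Irreducible X.charpoly → Irreducible (g.val * X * (g⁻¹).val).charpoly) := by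
  refine ⟨?_, Matrix.isOpen_setOf_irreducible_charpoly, fun g X hX => ?_⟩
  · obtain ⟨A, hA⟩ := Matrix.exists_charpoly_eq
      (monic_X_pow_sub_C (p : ℚ_[p]) (n := n) (by omega)) natDegree_X_pow_sub_C
    refine ⟨A, ?_⟩
    rw [Set.mem_ofPred_eq, hA]
    simpa using irreducible_X_pow_sub_C_of_prime (K := ℚ_[p]) PadicInt.prime_p (by omega)
  · rwa [Matrix.coe_units_inv, Matrix.charpoly_units_conj]
end
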